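/- Let F be a tileable figure with equilibrium function eq and base vertex w₀. Then: (1) a vertex v∈V_F belongs to the forced component U_∞ if and only if h(v)=h'(v) for all h,h'∈H_F; and (2) an arc a=(v,v')∈E_F joins two vertices of the same forced component if and only if h(v')−h(v)=h'(v')−h'(v) for all h,h'∈H_F. -/

import Mathlib

open Classical

noncomputable section

abbrev Vtx : Type := ℤ × ℤ
abbrev GArc : Type := Vtx × Vtx

/-- `a` is an arc of the grid graph `Λ⁺`: its endpoints differ by a unit vector. -/
def IsArc (a : GArc) : Prop :=
  (a.2.1 - a.1.1).natAbs + (a.2.2 - a.1.2).natAbs = 1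

/-- reversal of an arc -/
def arev (a : GArc) : GArc := (a.2, a.1)

/-- `+1` if the cell with lower-left corner `c` is black, `-1` if it is white
(checkerboard coloring). -/
def colorSign (c : Vtx) : ℤ := if (c.1 + c.2) % 2 = 0 then 1 else -1

/-- spin of an arc: `+1` if a traveler along the arc has a white cell on its left,
`-1` otherwise. -/
def sp (a : GArc) : ℤ :=
  colorSign a.1 * ((a.2.2 - a.1.2) ^ 2 - (a.2.1 - a.1.1) ^ 2)

/-- the arcs of a path/cycle given by its list of vertices -/
def arcsOf (C : List Vtx) : List GArc := C.zip C.tail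

/-- sum of a function `g` on arcs over all the arcs of `C` (with multiplicity) -/
def sumOn (g : GArc → ℤ) (C : List Vtx) : ℤ := ((arcsOf C).map g).sum

/-- a (closed) cycle of the grid -/
def IsCycle (C : List Vtx) : Prop :=
  2 ≤ C.length ∧ C.head? = C.getLast? ∧ ∀ a ∈ arcsOf C, IsArc a

/-- an elementary cycle: no repeated vertex except the endpoints -/
def IsElemCycle (C : List Vtx) : Prop := IsCycle C ∧ C.dropLast.Nodup

/-- contribution of an arc to the winding number of a cycle around the center of
cell `c` (crossings of the horizontal ray going East from the center of `c`). -/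
def windTerm (c : Vtx) (a : GArc) : ℤ :=
  if a.1.1 = a.2.1 ∧ c.1 < a.1.1 ∧ min a.1.2 a.2.2 = c.2 then a.2.2 - a.1.2 else 0

/-- winding number of the cycle `C` around the center of the cell `c` -/
def wind (C : List Vtx) (c : Vtx) : ℤ := sumOn (windTerm c) C

/-- a cycle is clockwise when its winding number around any cell is nonpositive
(`-1` on enclosed cells, `0` elsewhere) -/
def IsClockwise (C : List Vtx) : Prop := ∀ c : Vtx, wind C c ≤ 0

/-- a cell is enclosed by `C` when the winding number of `C` around it is nonzero -/
def Encloses (C : List Vtx) (c : Vtx) : Prop := wind C c ≠ 0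

/-- number of black cells minus number of white cells enclosed by a clockwise cycle -/
def Dis (C : List Vtx) : ℤ := -∑ᶠ c : Vtx, wind C c * colorSign c

/-- 4-adjacency of cells (shared edge) -/
def adj4 (c c' : Vtx) : Prop := (c'.1 - c.1).natAbs + (c'.2 - c.2).natAbs = 1

/-- 8-adjacency of cells (shared vertex at least) -/
def adj8 (c c' : Vtx) : Prop := c ≠ c' ∧ (c'.1 - c.1).natAbs ≤ 1 ∧ (c'.2 - c.2).natAbs ≤ 1

/-- a figure: a nonempty, finite, 4-connected set of cells such that no vertex has
all its incident edges on the boundary (no diagonal pinch, so no vertex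
duplication is needed). -/
def IsFigure (F : Finset Vtx) : Prop :=
  F.Nonempty ∧
  (∀ c ∈ F, ∀ c' ∈ F, Relation.ReflTransGen (fun x y => x ∈ F ∧ y ∈ F ∧ adj4 x y) c c') ∧
  (∀ x y : ℤ,
    ¬((x - 1, y - 1) ∈ F ∧ (x, y) ∈ F ∧ (x, y - 1) ∉ F ∧ (x - 1, y) ∉ F) ∧
    ¬((x, y - 1) ∈ F ∧ (x - 1, y) ∈ F ∧ (x - 1, y - 1) ∉ F ∧ (x, y) ∉ F))

/-- one of the two cells adjacent to the edge `[a]` -/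
def cellA (a : GArc) : Vtx :=
  if a.1.2 = a.2.2 then (min a.1.1 a.2.1, a.1.2) else (a.1.1, min a.1.2 a.2.2)

/-- the other cell adjacent to the edge `[a]` -/
def cellB (a : GArc) : Vtx :=
  if a.1.2 = a.2.2 then (min a.1.1 a.2.1, a.1.2 - 1) else (a.1.1 - 1, min a.1.2 a.2.2)

/-- arcs of the graph `G_F`: the edge `[a]` is a side of a cell of `F` -/
def ArcF (F : Finset Vtx) (a : GArc) : Prop := IsArc a ∧ (cellA a ∈ F ∨ cellB a ∈ F)

/-- boundary arcs of `F`: exactly one of the two adjacent cells is in `F` -/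
def BoundaryArcF (F : Finset Vtx) (a : GArc) : Prop :=
  IsArc a ∧ ¬(cellA a ∈ F ↔ cellB a ∈ F)

/-- interior arcs of `F`: both adjacent cells are in `F` -/
def InteriorArcF (F : Finset Vtx) (a : GArc) : Prop :=
  IsArc a ∧ cellA a ∈ F ∧ cellB a ∈ F

/-- `v` is a corner of the cell with lower-left corner `c` -/
def isCorner (v c : Vtx) : Prop :=
  (v.1 = c.1 ∨ v.1 = c.1 + 1) ∧ (v.2 = c.2 ∨ v.2 = c.2 + 1)

/-- vertices of `G_F`: the corners of the cells of `F` -/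
def VF (F : Finset Vtx) : Set Vtx := {v | ∃ c ∈ F, isCorner v c}

/-- a cycle of the graph `G_F` -/
def IsCycleF (F : Finset Vtx) (C : List Vtx) : Prop :=
  2 ≤ C.length ∧ C.head? = C.getLast? ∧ ∀ a ∈ arcsOf C, ArcF F a

/-- an elementary cycle of the graph `G_F` -/
def IsElemCycleF (F : Finset Vtx) (C : List Vtx) : Prop :=
  IsCycleF F C ∧ C.dropLast.Nodup

/-- number of black cells of `F` minus number of white cells of `F` enclosed by
the clockwise cycle `C` -/
def DisF (F : Finset Vtx) (C : List Vtx) : ℤ := -∑ c ∈ F, wind C c * colorSign c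

/-- `ef` is skew-symmetric on the arcs of `G_F` -/
def IsSkewOnF (F : Finset Vtx) (ef : GArc → ℤ) : Prop :=
  ∀ a, ArcF F a → ef (arev a) = -ef a

/-- an equilibrium function of the figure `F` -/
def IsEquilibrium (F : Finset Vtx) (ef : GArc → ℤ) : Prop :=
  IsSkewOnF F ef ∧
  ∀ C, IsElemCycleF F C → IsClockwise C → sumOn sp C + sumOn ef C = 4 * DisF F C

/-- the four sides of the cell `c`, as canonically oriented arcs -/
def sides (c : Vtx) : List GArc :=
  [((c.1, c.2), (c.1 + 1, c.2)), ((c.1, c.2 + 1), (c.1 + 1, c.2 + 1)),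
   ((c.1, c.2), (c.1, c.2 + 1)), ((c.1 + 1, c.2), (c.1 + 1, c.2 + 1))]

/-- a domino tiling of `F`, encoded by the symmetric set `D` of the arcs whose
underlying edges are the central axes of its dominoes: every central axis has
both of its adjacent cells in `F` (dominoes are included in `F`), and every cell
of `F` is covered by exactly one domino (exactly one of its sides is a central
axis): no overlap and no gap. -/
def IsTiling (F : Finset Vtx) (D : Set GArc) : Prop :=
  (∀ a ∈ D, arev a ∈ D) ∧
  (∀ a ∈ D, IsArc a ∧ cellA a ∈ F ∧ cellB a ∈ F) ∧
  (∀ c ∈ F, ∃! a, a ∈ sides c ∧ a ∈ D)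

/-- characteristic function of a tiling: `1` on central axes, `0` elsewhere -/
def chi (D : Set GArc) (a : GArc) : ℤ := if a ∈ D then 1 else 0

/-- the height difference function of a tiling -/
def gT (ef : GArc → ℤ) (D : Set GArc) (a : GArc) : ℤ :=
  ef a - sp a + 2 * sp a * (1 - 2 * chi D a)

/-- the function `t`: `eq(a)-sp(a)+2` on interior arcs, `eq(a)+sp(a)` on boundary arcs -/
def tArc (F : Finset Vtx) (ef : GArc → ℤ) (a : GArc) : ℤ :=
  if cellA a ∈ F ∧ cellB a ∈ F then ef a - sp a + 2 else ef a + sp a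

/-- the function `b`: `eq(a)-sp(a)-2` on interior arcs, `eq(a)+sp(a)` on boundary arcs -/
def bArc (F : Finset Vtx) (ef : GArc → ℤ) (a : GArc) : ℤ :=
  if cellA a ∈ F ∧ cellB a ∈ F then ef a - sp a - 2 else ef a + sp a

/-- the 8-connected component of the cell `c` in the complement of `F` -/
def comp8 (F : Finset Vtx) (c : Vtx) : Set Vtx :=
  {c' | Relation.ReflTransGen (fun x y => x ∉ F ∧ y ∉ F ∧ adj8 x y) c c'}

/-- `c` belongs to a hole of `F` (a finite 8-connected component of the complement) -/
def IsHoleCell (F : Finset Vtx) (c : Vtx) : Prop := c ∉ F ∧ (comp8 F c).Finite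

/-- `c` belongs to `H_∞`, the infinite 8-connected component of the complement -/
def IsHinfCell (F : Finset Vtx) (c : Vtx) : Prop := c ∉ F ∧ ¬(comp8 F c).Finite

/-- `w` is a vertex of `V_F` on the boundary of `H_∞` -/
def OnOuterBoundary (F : Finset Vtx) (w : Vtx) : Prop :=
  w ∈ VF F ∧ ∃ c, IsHinfCell F c ∧ isCorner w c

/-- vertices on the boundary of `F` -/
def Vb (F : Finset Vtx) : Set Vtx :=
  {v | (∃ c ∈ F, isCorner v c) ∧ ∃ c, c ∉ F ∧ isCorner v c}

/-- `h` belongs to the class `H_F` of height functions -/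
def InHF (F : Finset Vtx) (ef : GArc → ℤ) (w0 : Vtx) (h : Vtx → ℤ) : Prop :=
  h w0 = 0 ∧ ∀ a, ArcF F a →
    (h a.2 - h a.1 = bArc F ef a ∨ h a.2 - h a.1 = tArc F ef a)

/-- `h` is the height function induced by the tiling `D` (based at `w0`) -/
def IsHeightOf (F : Finset Vtx) (ef : GArc → ℤ) (D : Set GArc) (w0 : Vtx)
    (h : Vtx → ℤ) : Prop :=
  h w0 = 0 ∧ ∀ a, ArcF F a → h a.2 - h a.1 = gT ef D a

/-- a critical cycle: an elementary cycle of `G_F` with `t(C) = 0` -/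
def CriticalCycle (F : Finset Vtx) (ef : GArc → ℤ) (C : List Vtx) : Prop :=
  IsElemCycleF F C ∧ sumOn (tArc F ef) C = 0

/-- a strongly critical cycle: critical, and `sp(a) = 1` on all its interior arcs -/
def StronglyCriticalCycle (F : Finset Vtx) (ef : GArc → ℤ) (C : List Vtx) : Prop :=
  CriticalCycle F ef C ∧ ∀ a ∈ arcsOf C, InteriorArcF F a → sp a = 1

/-- two vertices are critically equivalent when some critical cycle passes
through both -/
def critRel (F : Finset Vtx) (ef : GArc → ℤ) (v v' : Vtx) : Prop :=
  ∃ C, CriticalCycle F ef C ∧ v ∈ C ∧ v' ∈ C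

/-- the forced component of the vertex `v` (class of the equivalence relation
generated by critical equivalence) -/
def fcomp (F : Finset Vtx) (ef : GArc → ℤ) (v : Vtx) : Set Vtx :=
  {v' | v' ∈ VF F ∧ Relation.EqvGen (critRel F ef) v v'}

/-- `S` is a forced component of `F` -/
def IsForcedComponent (F : Finset Vtx) (ef : GArc → ℤ) (S : Set Vtx) : Prop :=
  ∃ v ∈ VF F, S = fcomp F ef v

/-- `a` is an arc of the graph `G_T` of the tiling `D` -/
def GTArc (F : Finset Vtx) (ef : GArc → ℤ) (D : Set GArc) (a : GArc) : Prop :=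
  ArcF F a ∧ gT ef D a = tArc F ef a

/-- there is a directed path in `G_T` from `u` to `v` -/
def GTReach (F : Finset Vtx) (ef : GArc → ℤ) (D : Set GArc) (u v : Vtx) : Prop :=
  Relation.ReflTransGen (fun x y => GTArc F ef D (x, y)) u v

/-- the result of an upward flip on the component `S`: add `4` on `S` -/
def flipUpAt (S : Set Vtx) (h : Vtx → ℤ) : Vtx → ℤ :=
  fun v => h v + S.indicator (fun _ => (4 : ℤ)) v

/-- the result of a downward flip on the component `S`: subtract `4` on `S` -/
def flipDownAt (S : Set Vtx) (h : Vtx → ℤ) : Vtx → ℤ :=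
  fun v => h v - S.indicator (fun _ => (4 : ℤ)) v

/-- `|h(v_S) - h'(v_S)|` for a representative `v_S` of `S` -/
def compDiff (h h' : Vtx → ℤ) (S : Set Vtx) : ℤ :=
  if hS : S.Nonempty then |h hS.some - h' hS.some| else 0

/-- the distance `Δ(h,h') = Σ_U |h(v_U) - h'(v_U)|` over forced components `U` -/
def Delta (F : Finset Vtx) (ef : GArc → ℤ) (h h' : Vtx → ℤ) : ℤ :=
  ∑ᶠ S ∈ {S : Set Vtx | IsForcedComponent F ef S}, compDiff h h' S

/-- a sequence of `n` allowed upward flips at forced components distinct from `U_∞` -/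
def UpFlipSeq (F : Finset Vtx) (ef : GArc → ℤ) (w0 : Vtx) (f : ℕ → Vtx → ℤ)
    (n : ℕ) : Prop :=
  ∀ i < n, ∃ S, IsForcedComponent F ef S ∧ S ≠ fcomp F ef w0 ∧
    InHF F ef w0 (f i) ∧ InHF F ef w0 (f (i + 1)) ∧ f (i + 1) = flipUpAt S (f i)

/-- a sequence of `n` allowed (upward or downward) flips, flipping at step `i`
the forced component `s i` (distinct from `U_∞`) -/
def FlipSeq (F : Finset Vtx) (ef : GArc → ℤ) (w0 : Vtx) (f : ℕ → Vtx → ℤ)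
    (s : ℕ → Set Vtx) (n : ℕ) : Prop :=
  ∀ i < n, IsForcedComponent F ef (s i) ∧ s i ≠ fcomp F ef w0 ∧
    InHF F ef w0 (f i) ∧ InHF F ef w0 (f (i + 1)) ∧
    (f (i + 1) = flipUpAt (s i) (f i) ∨ f (i + 1) = flipDownAt (s i) (f i))

/-- the four arcs of the two horizontal edges through `v` (central axes of the
pair of vertical dominoes covering the 2×2 square centered at `v`) -/
def hPairAxes (v : Vtx) : Set GArc :=
  {((v.1 - 1, v.2), v), (v, (v.1 - 1, v.2)), (v, (v.1 + 1, v.2)), ((v.1 + 1, v.2), v)}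

/-- the four arcs of the two vertical edges through `v` (central axes of the
pair of horizontal dominoes covering the 2×2 square centered at `v`) -/
def vPairAxes (v : Vtx) : Set GArc :=
  {((v.1, v.2 - 1), v), (v, (v.1, v.2 - 1)), (v, (v.1, v.2 + 1)), ((v.1, v.2 + 1), v)}

/-- a local flip: replace the pair of dominoes covering a 2×2 square by the
other pair covering the same square -/
def LocalFlip (D D' : Set GArc) : Prop :=
  ∃ v : Vtx, (hPairAxes v ⊆ D ∧ D' = (D \ hPairAxes v) ∪ vPairAxes v) ∨
             (vPairAxes v ⊆ D ∧ D' = (D \ vPairAxes v) ∪ hPairAxes v)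

/-- a sequence of `n` local flips between tilings of `F` -/
def LocalFlipSeq (F : Finset Vtx) (g : ℕ → Set GArc) (n : ℕ) : Prop :=
  ∀ i < n, IsTiling F (g i) ∧ IsTiling F (g (i + 1)) ∧ LocalFlip (g i) (g (i + 1))

/-- `h` is a maximal element of `(H_F, ≤)` -/
def MaximalInHF (F : Finset Vtx) (ef : GArc → ℤ) (w0 : Vtx) (h : Vtx → ℤ) : Prop :=
  InHF F ef w0 h ∧ ∀ h', InHF F ef w0 h' →
    (∀ v ∈ VF F, h v ≤ h' v) → ∀ v ∈ VF F, h' v = h v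

/-- `h` is a minimal element of `(H_F, ≤)` -/
def MinimalInHF (F : Finset Vtx) (ef : GArc → ℤ) (w0 : Vtx) (h : Vtx → ℤ) : Prop :=
  InHF F ef w0 h ∧ ∀ h', InHF F ef w0 h' →
    (∀ v ∈ VF F, h' v ≤ h v) → ∀ v ∈ VF F, h' v = h v

/-- an elementary cycle of `G_F` enclosing a single cell of `F` -/
def AroundSingleCell (F : Finset Vtx) (C : List Vtx) : Prop :=
  IsElemCycleF F C ∧ ∃ c ∈ F, ∀ c' : Vtx, wind C c' ≠ 0 ↔ c' = c

/-- a cycle of `G_F` following clockwise the boundary of a hole of `F`: it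
winds `-1` around each cell of the hole and `0` around every other cell -/
def IsClockwiseHoleContour (F : Finset Vtx) (C : List Vtx) : Prop :=
  IsElemCycleF F C ∧ ∃ c₀, IsHoleCell F c₀ ∧
    (∀ c ∈ comp8 F c₀, wind C c = -1) ∧ (∀ c ∉ comp8 F c₀, wind C c = 0)

end

/-!
Call `(u, v)` rigid when `h v - h u` is the same for all `h ∈ H_F`. Around a critical cycle
the differences of any `h ∈ H_F` telescope to `0 = t(C)` while each is at most `t`, so every
arc of the cycle is tight (`h(v') - h(v) = t(a)`) and critically equivalent vertices are rigid.

Conversely fix `h₀ ∈ H_F`. Lowering `h₀` by `4` on a set closed under outgoing tight arcs, or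
raising it on a set closed under incoming ones, stays in `H_F` as long as `w₀` is not moved,
because a non-tight arc sits at `b = t - 4`. For a rigid pair these moves are impossible
wherever they would change `h₀ v - h₀ u`; this yields tight paths `v → u` and `u → v`, and a
closed tight walk shortcuts to elementary cycles with `t = 0`, i.e. critical ones. Both parts
of the theorem are instances of "rigid ⇔ critically equivalent", for the pairs `(w₀, v)` and
`(v, v')`.
-/

namespace List

variable {α : Type*}

theorem forall_mem_zip_tail_iff_isChain {R : α → α → Prop} :
    ∀ {l : List α}, (∀ p ∈ l.zip l.tail, R p.1 p.2) ↔ IsChain R l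
  | [] => by simp
  | [_] => by simp
  | a :: b :: l => by
    rw [isChain_cons_cons, ← forall_mem_zip_tail_iff_isChain]
    simp

theorem exists_nodup_isChain_cons_of_relationReflTransGen {r : α → α → Prop} {a b : α}
    (h : Relation.ReflTransGen r a b) :
    ∃ l, IsChain r (a :: l) ∧ (a :: l).Nodup ∧ (a :: l).getLast? = some b := by
  induction h using Relation.ReflTransGen.head_induction_on with
  | refl => exact ⟨[], .singleton _, nodup_singleton _, rfl⟩
  | @head c d hcd _ ih =>
    obtain ⟨l, hchain, hnd, hlast⟩ := ih
    by_cases hc : c ∈ d :: l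
    · obtain ⟨s, t, hst⟩ := append_of_mem hc
      rw [hst] at hchain hnd hlast
      refine ⟨t, hchain.right_of_append, hnd.sublist (sublist_append_right _ _), ?_⟩
      simpa using hlast
    · exact ⟨d :: l, hchain.cons_cons hcd, nodup_cons.2 ⟨hc, hnd⟩,
        by rwa [getLast?_cons_cons]⟩

end List

section Arcs

variable {F : Finset Vtx} {ef : GArc → ℤ} {a : GArc}

lemma isArc_arev (h : IsArc a) : IsArc (arev a) := by
  simp only [IsArc, arev] at *
  omega

lemma sp_arev (h : IsArc a) : sp (arev a) = -sp a := by
  obtain ⟨⟨x₁, y₁⟩, ⟨x₂, y₂⟩⟩ := a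
  simp only [IsArc] at h
  have hcolor : colorSign (x₂, y₂) = -colorSign (x₁, y₁) := by
    unfold colorSign
    split_ifs <;> omega
  simp only [sp, arev, hcolor]
  ring

lemma cellA_arev (h : IsArc a) : cellA (arev a) = cellA a := by
  obtain ⟨⟨x₁, y₁⟩, ⟨x₂, y₂⟩⟩ := a
  simp only [IsArc] at h
  rcases (by omega : y₁ = y₂ ∨ x₁ = x₂ ∧ y₁ ≠ y₂) with rfl | ⟨rfl, hy⟩
  · simp [cellA, arev, min_comm]
  · simp [cellA, arev, min_comm, hy, hy.symm]

lemma cellB_arev (h : IsArc a) : cellB (arev a) = cellB a := by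
  obtain ⟨⟨x₁, y₁⟩, ⟨x₂, y₂⟩⟩ := a
  simp only [IsArc] at h
  rcases (by omega : y₁ = y₂ ∨ x₁ = x₂ ∧ y₁ ≠ y₂) with rfl | ⟨rfl, hy⟩
  · simp [cellB, arev, min_comm]
  · simp [cellB, arev, min_comm, hy, hy.symm]

lemma ArcF.arev (ha : ArcF F a) : ArcF F (arev a) :=
  ⟨isArc_arev ha.1, by rw [cellA_arev ha.1, cellB_arev ha.1]; exact ha.2⟩

lemma ArcF.mem_VF (ha : ArcF F a) : a.1 ∈ VF F ∧ a.2 ∈ VF F := by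
  obtain ⟨⟨x₁, y₁⟩, ⟨x₂, y₂⟩⟩ := a
  obtain ⟨harc, hcell⟩ := ha
  simp only [IsArc] at harc
  unfold cellA cellB at hcell
  simp only [VF, isCorner, Set.mem_ofPred_eq] at hcell ⊢
  split_ifs at hcell <;> rcases hcell with hc | hc <;>
    exact ⟨⟨_, hc, by omega⟩, ⟨_, hc, by omega⟩⟩

lemma tArc_arev (hsk : IsSkewOnF F ef) (ha : ArcF F a) :
    tArc F ef (arev a) = -bArc F ef a := by
  unfold bArc tArc
  rw [cellA_arev ha.1, cellB_arev ha.1, hsk a ha, sp_arev ha.1]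
  split_ifs <;> ring

lemma bArc_le_tArc : bArc F ef a ≤ tArc F ef a := by
  unfold bArc tArc
  split_ifs <;> omega

end Arcs

section Telescoping

lemma sumOn_sub_cons (h : Vtx → ℤ) (a : Vtx) (l : List Vtx) :
    sumOn (fun p => h p.2 - h p.1) (a :: l) =
      h ((a :: l).getLast (List.cons_ne_nil _ _)) - h a := by
  induction l generalizing a with
  | nil => simp [sumOn, arcsOf]
  | cons b l ih =>
    have hcons : sumOn (fun p => h p.2 - h p.1) (a :: b :: l)
        = (h b - h a) + sumOn (fun p => h p.2 - h p.1) (b :: l) := by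
      simp [sumOn, arcsOf]
    rw [hcons, ih, List.getLast_cons_cons]
    ring

lemma sumOn_sub_eq_zero {C : List Vtx} (hC : C.head? = C.getLast?) (h : Vtx → ℤ) :
    sumOn (fun p => h p.2 - h p.1) C = 0 := by
  cases C with
  | nil => rfl
  | cons a l =>
    rw [List.getLast?_eq_some_getLast (List.cons_ne_nil _ _)] at hC
    rw [sumOn_sub_cons, ← Option.some_inj.1 hC]
    simp

end Telescoping

section Critical

variable {F : Finset Vtx} {ef : GArc → ℤ} {w0 : Vtx} {h h' : Vtx → ℤ} {C : List Vtx}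

lemma CriticalCycle.diff_eq_tArc (hC : CriticalCycle F ef C) (hh : InHF F ef w0 h) :
    ∀ p ∈ arcsOf C, h p.2 - h p.1 = tArc F ef p := by
  obtain ⟨⟨⟨_, hclosed, harc⟩, _⟩, hcrit⟩ := hC
  have hle : ∀ p ∈ arcsOf C, h p.2 - h p.1 ≤ tArc F ef p := fun p hp => by
    rcases hh.2 p (harc p hp) with hb | ht
    · exact hb ▸ bArc_le_tArc
    · exact ht.le
  by_contra! ⟨p, hp, hne⟩
  have hlt := List.sum_lt_sum _ _ hle ⟨p, hp, lt_of_le_of_ne (hle p hp) hne⟩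
  have hzero := sumOn_sub_eq_zero hclosed h
  unfold sumOn at hcrit hzero
  omega

lemma CriticalCycle.sub_eq_sub (hC : CriticalCycle F ef C) (hh : InHF F ef w0 h)
    (hh' : InHF F ef w0 h') {u v : Vtx} (hu : u ∈ C) (hv : v ∈ C) :
    h v - h u = h' v - h' u := by
  have hchain : C.IsChain (fun p q => h p - h' p = h q - h' q) :=
    List.forall_mem_zip_tail_iff_isChain.1 fun p hp => by
      have := hC.diff_eq_tArc hh p hp
      have := hC.diff_eq_tArc hh' p hp
      omega
  have hne : C ≠ [] := List.ne_nil_of_mem hu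
  have hconst := hchain.induction (fun z => h z - h' z = h (C.head hne) - h' (C.head hne)) C
    (fun _ _ hpq hp => hpq ▸ hp) (fun _ => rfl)
  have := hconst u hu
  have := hconst v hv
  omega

end Critical

section Tight

variable {F : Finset Vtx} {ef : GArc → ℤ} {w0 : Vtx} {h : Vtx → ℤ}

def TightArc (F : Finset Vtx) (ef : GArc → ℤ) (h : Vtx → ℤ) (p q : Vtx) : Prop :=
  ArcF F (p, q) ∧ h q - h p = tArc F ef (p, q)

lemma add_four_eq_tArc_of_not_tightArc (hh : InHF F ef w0 h) {x y : Vtx} (ha : ArcF F (x, y))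
    (hnt : ¬TightArc F ef h x y) : h y - h x + 4 = tArc F ef (x, y) := by
  have hne : h y - h x ≠ tArc F ef (x, y) := fun ht => hnt ⟨ha, ht⟩
  have hd : h y - h x = _ ∨ h y - h x = _ := hh.2 (x, y) ha
  unfold bArc tArc at *
  split_ifs at * <;> omega

lemma sub_four_eq_bArc_of_not_tightArc (hsk : IsSkewOnF F ef) (hh : InHF F ef w0 h)
    {x y : Vtx} (ha : ArcF F (x, y)) (hnt : ¬TightArc F ef h y x) :
    h y - h x - 4 = bArc F ef (x, y) := by
  have := add_four_eq_tArc_of_not_tightArc hh ha.arev hnt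
  have := tArc_arev hsk ha
  simp only [arev] at *
  omega

lemma critRel_of_tightArc_of_reflTransGen {x y : Vtx} (hxy : TightArc F ef h x y)
    (hyx : Relation.ReflTransGen (TightArc F ef h) y x) : critRel F ef x y := by
  obtain ⟨l, hchain, hnd, hlast⟩ := List.exists_nodup_isChain_cons_of_relationReflTransGen hyx
  have htight : ∀ p ∈ arcsOf (x :: y :: l), TightArc F ef h p.1 p.2 :=
    List.forall_mem_zip_tail_iff_isChain.2 (hchain.cons_cons hxy)
  have hclosed : (x :: y :: l).head? = (x :: y :: l).getLast? := by
    rw [List.getLast?_cons_cons, hlast]; rfl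
  have hx : x ∉ (y :: l).dropLast := by
    have hsplit := List.dropLast_append_getLast? x (by rw [hlast]; rfl)
    rw [← hsplit, List.nodup_append] at hnd
    exact fun hmem => hnd.2.2 x hmem x (List.mem_singleton_self x) rfl
  refine ⟨x :: y :: l, ⟨⟨⟨by simp, hclosed, fun p hp => (htight p hp).1⟩, ?_⟩, ?_⟩,
    by simp, by simp⟩
  · rw [List.dropLast_cons_cons]
    exact List.nodup_cons.2 ⟨hx, hnd.sublist (List.dropLast_sublist _)⟩
  · rw [← sumOn_sub_eq_zero hclosed h]
    exact congrArg List.sum (List.map_congr_left fun p hp => (htight p hp).2.symm)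

lemma eqvGen_critRel_of_reflTransGen {p q : Vtx}
    (hpq : Relation.ReflTransGen (TightArc F ef h) p q)
    (hqp : Relation.ReflTransGen (TightArc F ef h) q p) : Relation.EqvGen (critRel F ef) p q := by
  induction hpq using Relation.ReflTransGen.head_induction_on with
  | refl => exact .refl _
  | @head a b hab hbq ih =>
    exact .trans _ _ _ (.rel _ _ (critRel_of_tightArc_of_reflTransGen hab (hbq.trans hqp)))
      (ih (hqp.tail hab))

end Tight

section Flips

variable {F : Finset Vtx} {ef : GArc → ℤ} {w0 : Vtx} {h : Vtx → ℤ} {S : Set Vtx}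

lemma inHF_flipDownAt (hsk : IsSkewOnF F ef) (hh : InHF F ef w0 h) (hw0 : w0 ∉ S)
    (hS : ∀ x y, TightArc F ef h x y → x ∈ S → y ∈ S) :
    InHF F ef w0 (flipDownAt S h) := by
  refine ⟨by simp [flipDownAt, hw0, hh.1], fun ⟨x, y⟩ ha => ?_⟩
  have hd := hh.2 (x, y) ha
  simp only [flipDownAt, Set.indicator_apply] at hd ⊢
  by_cases hx : x ∈ S <;> by_cases hy : y ∈ S <;> simp only [hx, hy, if_true, if_false]
  · simpa using hd
  · have := add_four_eq_tArc_of_not_tightArc hh ha fun ht => hy (hS x y ht hx)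
    right; omega
  · have := sub_four_eq_bArc_of_not_tightArc hsk hh ha fun ht => hx (hS y x ht hy)
    left; omega
  · simpa using hd

lemma inHF_flipUpAt (hsk : IsSkewOnF F ef) (hh : InHF F ef w0 h) (hw0 : w0 ∉ S)
    (hS : ∀ x y, TightArc F ef h x y → y ∈ S → x ∈ S) : InHF F ef w0 (flipUpAt S h) := by
  refine ⟨by simp [flipUpAt, hw0, hh.1], fun ⟨x, y⟩ ha => ?_⟩
  have hd := hh.2 (x, y) ha
  simp only [flipUpAt, Set.indicator_apply] at hd ⊢
  by_cases hx : x ∈ S <;> by_cases hy : y ∈ S <;> simp only [hx, hy, if_true, if_false]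
  · simpa using hd
  · have := sub_four_eq_bArc_of_not_tightArc hsk hh ha fun ht => hy (hS y x ht hx)
    left; omega
  · have := add_four_eq_tArc_of_not_tightArc hh ha fun ht => hx (hS x y ht hy)
    right; omega
  · simpa using hd

end Flips

section Rigid

variable {F : Finset Vtx} {ef : GArc → ℤ} {w0 : Vtx}

def RigidPair (F : Finset Vtx) (ef : GArc → ℤ) (w0 u v : Vtx) : Prop :=
  ∀ h h' : Vtx → ℤ, InHF F ef w0 h → InHF F ef w0 h' → h v - h u = h' v - h' u

lemma rigidPair_equivalence : Equivalence (RigidPair F ef w0) where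
  refl _ _ _ _ _ := by ring
  symm huv h h' hh hh' := by have := huv h h' hh hh'; omega
  trans huv hvw h h' hh hh' := by have := huv h h' hh hh'; have := hvw h h' hh hh'; omega

lemma rigidPair_of_eqvGen_critRel {u v : Vtx} (huv : Relation.EqvGen (critRel F ef) u v) :
    RigidPair F ef w0 u v :=
  rigidPair_equivalence.eqvGen_iff.1 <| huv.mono fun _ _ ⟨_, hC, hu, hv⟩ _ _ hh hh' =>
    hC.sub_eq_sub hh hh' hu hv

/-- Lowering `h₀` on the tight-reachability set of `v`, or raising it on the
tight-coreachability set of `u`, would change `h₀ v - h₀ u`, so each set contains `w₀` or the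
other endpoint. -/
lemma RigidPair.reflTransGen {h₀ : Vtx → ℤ} (hsk : IsSkewOnF F ef) (hh₀ : InHF F ef w0 h₀)
    {u v : Vtx} (huv : RigidPair F ef w0 u v) :
    Relation.ReflTransGen (TightArc F ef h₀) v u := by
  let T := Relation.ReflTransGen (TightArc F ef h₀)
  have hdown : T v w0 ∨ T v u := by
    by_contra! ⟨hw, hu⟩
    have hflip := inHF_flipDownAt (S := {z | T v z}) hsk hh₀ hw fun x y hxy hx => hx.tail hxy
    have := huv h₀ _ hh₀ hflip
    simp only [flipDownAt, Set.indicator_of_mem (show v ∈ {z | T v z} from .refl),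
      Set.indicator_of_notMem (show u ∉ {z | T v z} from hu)] at this
    omega
  have hup : T w0 u ∨ T v u := by
    by_contra! ⟨hw, hv⟩
    have hflip := inHF_flipUpAt (S := {z | T z u}) hsk hh₀ hw fun x y hxy hy => hy.head hxy
    have := huv h₀ _ hh₀ hflip
    simp only [flipUpAt, Set.indicator_of_mem (show u ∈ {z | T z u} from .refl),
      Set.indicator_of_notMem (show v ∉ {z | T z u} from hv)] at this
    omega
  exact hdown.elim (fun hvw => hup.elim hvw.trans id) id

lemma eqvGen_critRel_iff_rigidPair (hsk : IsSkewOnF F ef) (htile : ∃ h, InHF F ef w0 h)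
    {u v : Vtx} : Relation.EqvGen (critRel F ef) u v ↔ RigidPair F ef w0 u v := by
  obtain ⟨h₀, hh₀⟩ := htile
  refine ⟨rigidPair_of_eqvGen_critRel, fun huv => ?_⟩
  exact eqvGen_critRel_of_reflTransGen (rigidPair_equivalence.symm huv |>.reflTransGen hsk hh₀)
    (huv.reflTransGen hsk hh₀)

end Rigid

lemma exists_forcedComponent_iff {F : Finset Vtx} {ef : GArc → ℤ} {x y : Vtx}
    (hx : x ∈ VF F) (hy : y ∈ VF F) :
    (∃ S, IsForcedComponent F ef S ∧ x ∈ S ∧ y ∈ S) ↔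
      Relation.EqvGen (critRel F ef) x y := by
  constructor
  · rintro ⟨_, ⟨u, _, rfl⟩, hux, huy⟩
    exact hux.2.symm.trans _ _ _ huy.2
  · exact fun hxy => ⟨fcomp F ef x, ⟨x, hx, rfl⟩, ⟨hx, .refl _⟩, ⟨hy, hxy⟩⟩

theorem Uinf_and_same_component_characterization_general (F : Finset Vtx)
    (ef : GArc → ℤ) (hef : IsEquilibrium F ef)
    (w0 : Vtx)
    (htile : ∃ h : Vtx → ℤ, InHF F ef w0 h) :
    (∀ v ∈ VF F, (v ∈ fcomp F ef w0 ↔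
      ∀ h h' : Vtx → ℤ, InHF F ef w0 h → InHF F ef w0 h' → h v = h' v)) ∧
    (∀ a : GArc, ArcF F a →
      ((∃ S : Set Vtx, IsForcedComponent F ef S ∧ a.1 ∈ S ∧ a.2 ∈ S) ↔
       ∀ h h' : Vtx → ℤ, InHF F ef w0 h → InHF F ef w0 h' →
         h a.2 - h a.1 = h' a.2 - h' a.1)) := by
  refine ⟨fun v hv => ?_, fun a ha => ?_⟩
  · simp only [fcomp, Set.mem_ofPred_eq, hv, true_and, eqvGen_critRel_iff_rigidPair hef.1 htile,
      RigidPair]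
    refine forall₄_congr fun h h' hh hh' => ?_
    rw [hh.1, hh'.1, sub_zero, sub_zero]
  · rw [exists_forcedComponent_iff ha.mem_VF.1 ha.mem_VF.2,
      eqvGen_critRel_iff_rigidPair hef.1 htile]
    rfl

/-- (1) a vertex belongs to `U_∞` iff all functions of `H_F`
agree at it; (2) an arc of `E_F` joins two vertices of the same forced
component iff all functions of `H_F` have the same difference along it. -/
theorem Uinf_and_same_component_characterization (F : Finset Vtx)
    (hF : IsFigure F) (ef : GArc → ℤ) (hef : IsEquilibrium F ef)
    (w0 : Vtx) (hw0 : OnOuterBoundary F w0)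
    (htile : ∃ h : Vtx → ℤ, InHF F ef w0 h) :
    (∀ v ∈ VF F, (v ∈ fcomp F ef w0 ↔
      ∀ h h' : Vtx → ℤ, InHF F ef w0 h → InHF F ef w0 h' → h v = h' v)) ∧
    (∀ a : GArc, ArcF F a →
      ((∃ S : Set Vtx, IsForcedComponent F ef S ∧ a.1 ∈ S ∧ a.2 ∈ S) ↔
       ∀ h h' : Vtx → ℤ, InHF F ef w0 h → InHF F ef w0 h' →
         h a.2 - h a.1 = h' a.2 - h' a.1)) :=
  Uinf_and_same_component_characterization_general F ef hef w0 htile
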